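/- arXiv:1808.03865 — 2 statements merged into one kernel-verified Lean document; each statement's English description precedes it below -/
import Mathlib

section
/- Every generalized polyhedron is a finite union of relatively open polyhedra. That is, if P is a finite intersection of open and closed halfspaces in ℝⁿ, then P can be written as a finite union of sets Q each of which is a generalized polyhedron satisfying Q = relint(Q). -/
open Matrix

/-- `S` is a generalized polyhedron: a finite intersection of open and closed
halfspaces. -/
def IsGenPolyhedron {n : ℕ} (S : Set (Fin n → ℝ)) : Prop :=
  ∃ (p q : ℕ) (A : Fin p → (Fin n → ℝ)) (b : Fin p → ℝ)
    (C : Fin q → (Fin n → ℝ)) (d : Fin q → ℝ),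
    S = {x | (∀ i, A i ⬝ᵥ x < b i) ∧ (∀ j, C j ⬝ᵥ x ≤ d j)}

/-- `S` is a relatively open polyhedron: a generalized polyhedron equal to
its relative interior. -/
def IsRelOpenPolyhedron {n : ℕ} (S : Set (Fin n → ℝ)) : Prop :=
  IsGenPolyhedron S ∧ intrinsicInterior ℝ S = S

/-- The intersection of an affine subspace with an open set equals its
intrinsic interior. -/
lemma key_relopen {n : ℕ} (W : AffineSubspace ℝ (Fin n → ℝ)) (U : Set (Fin n → ℝ))
    (hU : IsOpen U) :
    intrinsicInterior ℝ ((W : Set (Fin n → ℝ)) ∩ U) = (W : Set (Fin n → ℝ)) ∩ U := by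
  set Q : Set (Fin n → ℝ) := (W : Set (Fin n → ℝ)) ∩ U with hQ
  have hspan : (affineSpan ℝ Q : Set (Fin n → ℝ)) ⊆ (W : Set (Fin n → ℝ)) := by
    have : affineSpan ℝ Q ≤ W := affineSpan_le.mpr Set.inter_subset_left
    exact this
  have hpre : ((↑) ⁻¹' Q : Set (affineSpan ℝ Q)) = ((↑) ⁻¹' U : Set (affineSpan ℝ Q)) := by
    ext y
    simp only [Set.mem_preimage]
    constructor
    · exact fun h => h.2
    · exact fun h => ⟨hspan y.2, h⟩
  have hopen : IsOpen ((↑) ⁻¹' Q : Set (affineSpan ℝ Q)) := by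
    rw [hpre]; exact hU.preimage continuous_subtype_val
  rw [intrinsicInterior, hopen.interior_eq, Set.image_preimage_eq_inter_range,
    Subtype.range_coe]
  exact Set.inter_eq_self_of_subset_left (subset_affineSpan ℝ Q)

/-- Dot product with a fixed vector as a linear map. -/
def dotL {n : ℕ} (c : Fin n → ℝ) : (Fin n → ℝ) →ₗ[ℝ] ℝ where
  toFun x := c ⬝ᵥ x
  map_add' x y := by simp [dotProduct_add]
  map_smul' r x := by simp

lemma piece_relopen {n p q : ℕ} (A : Fin p → (Fin n → ℝ)) (b : Fin p → ℝ)
    (C : Fin q → (Fin n → ℝ)) (d : Fin q → ℝ) (σ : Fin q → Bool) :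
    intrinsicInterior ℝ
      {x | (∀ i, A i ⬝ᵥ x < b i) ∧
        (∀ j, if σ j then C j ⬝ᵥ x = d j else C j ⬝ᵥ x < d j)} =
      {x | (∀ i, A i ⬝ᵥ x < b i) ∧
        (∀ j, if σ j then C j ⬝ᵥ x = d j else C j ⬝ᵥ x < d j)} := by
  classical
  set L : (Fin n → ℝ) →ₗ[ℝ] (Fin q → ℝ) :=
    LinearMap.pi (fun j => if σ j then dotL (C j) else 0) with hL
  set c : Fin q → ℝ := fun j => if σ j then d j else 0 with hc
  set W : AffineSubspace ℝ (Fin n → ℝ) :=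
    AffineSubspace.comap L.toAffineMap (AffineSubspace.mk' c ⊥) with hW
  have hWmem : ∀ x, x ∈ W ↔ ∀ j, σ j = true → C j ⬝ᵥ x = d j := by
    intro x
    rw [hW, AffineSubspace.mem_comap, AffineSubspace.mem_mk']
    simp only [Submodule.mem_bot, vsub_eq_sub, sub_eq_zero]
    constructor
    · intro h j hj
      have := congrFun h j
      simpa [hL, hc, hj, dotL] using this
    · intro h
      funext j
      by_cases hj : σ j = true
      · simpa [hL, hc, hj, dotL] using h j hj
      · simp [hL, hc, hj, dotL]
  set U : Set (Fin n → ℝ) :=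
    {x | (∀ i, A i ⬝ᵥ x < b i) ∧ (∀ j, σ j = false → C j ⬝ᵥ x < d j)} with hU
  have hUopen : IsOpen U := by
    have h1 : U = (⋂ i, {x | A i ⬝ᵥ x < b i}) ∩
        (⋂ j ∈ {j | σ j = false}, {x | C j ⬝ᵥ x < d j}) := by
      ext x
      simp only [hU, Set.mem_inter_iff, Set.mem_iInter, Set.mem_setOf_eq]
    rw [h1]
    apply IsOpen.inter
    · exact isOpen_iInter_of_finite fun i =>
        isOpen_lt (dotL (A i)).continuous_of_finiteDimensional continuous_const
    · exact (Set.toFinite _).isOpen_biInter fun j _ =>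
        isOpen_lt (dotL (C j)).continuous_of_finiteDimensional continuous_const
  have hQeq : {x | (∀ i, A i ⬝ᵥ x < b i) ∧
      (∀ j, if σ j then C j ⬝ᵥ x = d j else C j ⬝ᵥ x < d j)} =
      (W : Set (Fin n → ℝ)) ∩ U := by
    ext x
    simp only [Set.mem_setOf_eq, Set.mem_inter_iff, SetLike.mem_coe, hWmem, hU]
    constructor
    · rintro ⟨h1, h2⟩
      refine ⟨fun j hj => by simpa [hj] using h2 j, h1, fun j hj => by simpa [hj] using h2 j⟩
    · rintro ⟨hw, h1, h2⟩
      refine ⟨h1, fun j => ?_⟩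
      by_cases hj : σ j = true
      · simp [hj, hw j hj]
      · simp only [Bool.not_eq_true] at hj
        simp [hj, h2 j hj]
  rw [hQeq]
  exact key_relopen W U hUopen

lemma piece_genpoly {n p q : ℕ} (A : Fin p → (Fin n → ℝ)) (b : Fin p → ℝ)
    (C : Fin q → (Fin n → ℝ)) (d : Fin q → ℝ) (σ : Fin q → Bool) :
    IsGenPolyhedron {x | (∀ i, A i ⬝ᵥ x < b i) ∧
      (∀ j, if σ j then C j ⬝ᵥ x = d j else C j ⬝ᵥ x < d j)} := by
  classical
  refine ⟨p + q, q + q,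
    Fin.append A (fun j => if σ j then 0 else C j),
    Fin.append b (fun j => if σ j then 1 else d j),
    Fin.append (fun j => if σ j then C j else 0) (fun j => if σ j then -(C j) else 0),
    Fin.append (fun j => if σ j then d j else 0) (fun j => if σ j then -(d j) else 0), ?_⟩
  ext x
  simp only [Set.mem_setOf_eq]
  constructor
  · rintro ⟨h1, h2⟩
    constructor
    · intro i
      refine Fin.addCases (fun i => ?_) (fun j => ?_) i
      · simpa [Fin.append_left] using h1 i
      · by_cases hj : σ j = true
        · simp [Fin.append_right, hj, zero_dotProduct]
        · have := h2 j
          simp only [Bool.not_eq_true] at hj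
          simp only [hj] at this
          simpa [Fin.append_right, hj] using this
    · intro j
      refine Fin.addCases (fun j => ?_) (fun j => ?_) j
      · by_cases hj : σ j = true
        · have := h2 j
          simp only [hj, if_true] at this
          simp [Fin.append_left, hj, this]
        · simp only [Bool.not_eq_true] at hj
          simp [Fin.append_left, hj, zero_dotProduct]
      · by_cases hj : σ j = true
        · have := h2 j
          simp only [hj, if_true] at this
          simp only [Fin.append_right]
          simp [hj, neg_dotProduct, this]
        · simp only [Bool.not_eq_true] at hj
          simp only [Fin.append_right]
          simp [hj, zero_dotProduct]
  · rintro ⟨h1, h2⟩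
    constructor
    · intro i
      have := h1 (Fin.castAdd q i)
      simpa [Fin.append_left] using this
    · intro j
      by_cases hj : σ j = true
      · have ha := h2 (Fin.castAdd q j)
        have hb := h2 (Fin.natAdd q j)
        simp only [Fin.append_left, Fin.append_right, hj, if_true, neg_dotProduct,
          neg_le_neg_iff] at ha hb
        simp [hj]
        linarith
      · have := h1 (Fin.natAdd p j)
        simp only [Bool.not_eq_true] at hj
        simp only [Fin.append_right, hj] at this
        simpa [hj] using this

/-- Every generalized polyhedron is a finite union of relatively open
polyhedra. -/
theorem stmt7 {n : ℕ} (P : Set (Fin n → ℝ)) (hP : IsGenPolyhedron P) :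
    ∃ (k : ℕ) (Q : Fin k → Set (Fin n → ℝ)),
      (∀ i, IsRelOpenPolyhedron (Q i)) ∧ P = ⋃ i, Q i := by
  classical
  obtain ⟨p, q, A, b, C, d, hPeq⟩ := hP
  set Qs : (Fin q → Bool) → Set (Fin n → ℝ) := fun σ =>
    {x | (∀ i, A i ⬝ᵥ x < b i) ∧
      (∀ j, if σ j then C j ⬝ᵥ x = d j else C j ⬝ᵥ x < d j)} with hQs
  set e := (Fintype.equivFin (Fin q → Bool)).symm with he
  refine ⟨Fintype.card (Fin q → Bool), fun i => Qs (e i), ?_, ?_⟩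
  · intro i
    exact ⟨piece_genpoly A b C d (e i), piece_relopen A b C d (e i)⟩
  · have hsurj : Function.Surjective e := e.surjective
    rw [hsurj.iUnion_comp Qs]
    rw [hPeq]
    ext x
    simp only [Set.mem_iUnion, Set.mem_setOf_eq, hQs]
    constructor
    · rintro ⟨h1, h2⟩
      refine ⟨fun j => decide (C j ⬝ᵥ x = d j), h1, fun j => ?_⟩
      by_cases hj : C j ⬝ᵥ x = d j
      · simp [hj]
      · have hd : decide (C j ⬝ᵥ x = d j) = false := decide_eq_false hj
        simp only [hd, Bool.false_eq_true, if_false]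
        exact lt_of_le_of_ne (h2 j) hj
    · rintro ⟨σ, h1, h2⟩
      refine ⟨h1, fun j => ?_⟩
      have := h2 j
      by_cases hj : σ j = true
      · simp only [hj, if_true] at this; exact le_of_eq this
      · simp only [Bool.not_eq_true] at hj
        simp only [hj, if_false] at this
        exact le_of_lt this
end

section
/- (Minkowski–Weyl for relatively open polyhedra) Let Q ⊆ ℝⁿ be a relatively open polyhedron. Then Q = P + R where P is a relatively open polytope (bounded relatively open polyhedron) and R = rec(cl(Q)) is the recession cone of the closure of Q. -/
open Matrix Pointwise

namespace Stmt9Aux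

variable {n m : ℕ}

/-- Directions annihilated by all constraints active at `y`. -/
def Wsub (M : Fin m → Fin n → ℝ) (c : Fin m → ℝ) (y : Fin n → ℝ) :
    Submodule ℝ (Fin n → ℝ) where
  carrier := {v | ∀ i, M i ⬝ᵥ y = c i → M i ⬝ᵥ v = 0}
  add_mem' := by
    intro a b ha hb i hi
    rw [dotProduct_add, ha i hi, hb i hi, add_zero]
  zero_mem' := by intro i hi; simp
  smul_mem' := by
    intro t a ha i hi
    rw [dotProduct_smul, ha i hi, smul_zero]

lemma mem_Wsub {M : Fin m → Fin n → ℝ} {c : Fin m → ℝ} {y v : Fin n → ℝ} :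
    v ∈ Wsub M c y ↔ ∀ i, M i ⬝ᵥ y = c i → M i ⬝ᵥ v = 0 := Iff.rfl

/-- Moving from `y` along direction `v` (orthogonal to active constraints) until a new
constraint becomes active. -/
lemma move {M : Fin m → Fin n → ℝ} {c : Fin m → ℝ} {y v : Fin n → ℝ}
    (hy : ∀ i, M i ⬝ᵥ y ≤ c i) (hv : v ∈ Wsub M c y) {j : Fin m} (hj : 0 < M j ⬝ᵥ v) :
    ∃ t : ℝ, 0 ≤ t ∧ (∀ i, M i ⬝ᵥ (y + t • v) ≤ c i) ∧
      Wsub M c (y + t • v) < Wsub M c y := by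
  classical
  set J : Finset (Fin m) := Finset.univ.filter (fun j => 0 < M j ⬝ᵥ v) with hJ
  have hjJ : j ∈ J := by simp [hJ, hj]
  have hJne : J.Nonempty := ⟨j, hjJ⟩
  set f : Fin m → ℝ := fun i => (c i - M i ⬝ᵥ y) / (M i ⬝ᵥ v) with hf
  set t : ℝ := J.inf' hJne f with ht
  have hmemJ : ∀ i, i ∈ J ↔ 0 < M i ⬝ᵥ v := by intro i; simp [hJ]
  have htnonneg : 0 ≤ t := by
    rw [ht, Finset.le_inf'_iff]
    intro i hi
    exact div_nonneg (by linarith [hy i]) (le_of_lt ((hmemJ i).mp hi))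
  -- the new point
  have hK : ∀ i, M i ⬝ᵥ (y + t • v) ≤ c i := by
    intro i
    rw [dotProduct_add, dotProduct_smul, smul_eq_mul]
    by_cases hiv : 0 < M i ⬝ᵥ v
    · have : t ≤ f i := Finset.inf'_le f ((hmemJ i).mpr hiv)
      have := (le_div_iff₀ hiv).mp this
      linarith
    · push_neg at hiv
      have : t * (M i ⬝ᵥ v) ≤ 0 := mul_nonpos_of_nonneg_of_nonpos htnonneg hiv
      linarith [hy i]
  -- the active set grows
  have hactive : ∀ i, M i ⬝ᵥ y = c i → M i ⬝ᵥ (y + t • v) = c i := by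
    intro i hi
    rw [dotProduct_add, dotProduct_smul, hv i hi, smul_zero, add_zero, hi]
  obtain ⟨j₁, hj₁J, hj₁⟩ := Finset.exists_mem_eq_inf' hJne f
  have hj₁v : 0 < M j₁ ⬝ᵥ v := (hmemJ j₁).mp hj₁J
  have hnewactive : M j₁ ⬝ᵥ (y + t • v) = c j₁ := by
    rw [dotProduct_add, dotProduct_smul, smul_eq_mul]
    have ht1 : t = (c j₁ - M j₁ ⬝ᵥ y) / (M j₁ ⬝ᵥ v) := by rw [ht, hj₁]
    rw [ht1, div_mul_cancel₀ _ (ne_of_gt hj₁v)]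
    ring
  refine ⟨t, htnonneg, hK, ?_⟩
  constructor
  · intro w hw i hi
    exact hw i (hactive i hi)
  · intro hle
    have := hle hv j₁ hnewactive
    rw [this] at hj₁v
    exact lt_irrefl 0 hj₁v


/-- Core decomposition: every point of the closed polyhedron `{x | Mx ≤ c}` is
a bounded point of the polyhedron plus a recession direction. -/
lemma core (M : Fin m → Fin n → ℝ) (c : Fin m → ℝ) :
    ∃ ρ : ℝ, 0 ≤ ρ ∧ ∀ x, (∀ i, M i ⬝ᵥ x ≤ c i) →
      ∃ p r, x = p + r ∧ (∀ i, M i ⬝ᵥ p ≤ c i) ∧ ‖p‖ ≤ ρ ∧ (∀ i, M i ⬝ᵥ r ≤ 0) := by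
  classical
  set KI : Finset (Fin m) → Set (Fin n → ℝ) :=
    fun I => {y | (∀ i ∈ I, M i ⬝ᵥ y = c i) ∧ ∀ i, M i ⬝ᵥ y ≤ c i} with hKI
  set pt : Finset (Fin m) → (Fin n → ℝ) :=
    fun I => if h : (KI I).Nonempty then h.choose else 0 with hpt
  have hFne : (Finset.univ : Finset (Finset (Fin m))).Nonempty := Finset.univ_nonempty
  set ρ : ℝ := max (Finset.univ.sup' hFne (fun I => ‖pt I‖)) 0 with hρ
  refine ⟨ρ, le_max_right _ _, ?_⟩
  -- base case: active constraints pin the point down modulo the lineality space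
  have hbase : ∀ x, (∀ i, M i ⬝ᵥ x ≤ c i) →
      (∀ v ∈ Wsub M c x, ∀ i, M i ⬝ᵥ v = 0) →
      ∃ p r, x = p + r ∧ (∀ i, M i ⬝ᵥ p ≤ c i) ∧ ‖p‖ ≤ ρ ∧ (∀ i, M i ⬝ᵥ r ≤ 0) := by
    intro x hx hL
    set I : Finset (Fin m) := Finset.univ.filter (fun i => M i ⬝ᵥ x = c i) with hI
    have hxKI : x ∈ KI I := ⟨fun i hi => (Finset.mem_filter.mp hi).2, hx⟩
    have hne : (KI I).Nonempty := ⟨x, hxKI⟩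
    have hpmem : pt I ∈ KI I := by
      rw [hpt]; simp only [dif_pos hne]; exact hne.choose_spec
    have hnorm : ‖pt I‖ ≤ ρ :=
      le_trans (Finset.le_sup' (fun J => ‖pt J‖) (Finset.mem_univ I)) (le_max_left _ _)
    refine ⟨pt I, x - pt I, by ring, hpmem.2, hnorm, ?_⟩
    have hmem : x - pt I ∈ Wsub M c x := by
      intro i hi
      have hiI : i ∈ I := by simp [hI, hi]
      rw [dotProduct_sub, hi, hpmem.1 i hiI, sub_self]
    intro i
    rw [hL _ hmem i]
  suffices H : ∀ d : ℕ, ∀ x, (∀ i, M i ⬝ᵥ x ≤ c i) →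
      Module.finrank ℝ (Wsub M c x) ≤ d →
      ∃ p r, x = p + r ∧ (∀ i, M i ⬝ᵥ p ≤ c i) ∧ ‖p‖ ≤ ρ ∧ (∀ i, M i ⬝ᵥ r ≤ 0) by
    intro x hx
    exact H (Module.finrank ℝ (Wsub M c x)) x hx le_rfl
  intro d
  induction d with
  | zero =>
    intro x hx hd
    refine hbase x hx ?_
    have : Wsub M c x = ⊥ := Submodule.finrank_eq_zero.mp (Nat.le_zero.mp hd)
    intro v hv i
    rw [this, Submodule.mem_bot] at hv
    rw [hv, dotProduct_zero]
  | succ d ih =>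
    intro x hx hd
    by_cases hL : ∀ v ∈ Wsub M c x, ∀ i, M i ⬝ᵥ v = 0
    · exact hbase x hx hL
    · push_neg at hL
      obtain ⟨v₀, hv₀, j₀, hj₀⟩ := hL
      -- pick a direction with some strictly positive constraint value
      obtain ⟨v, hv, j, hj⟩ : ∃ v, v ∈ Wsub M c x ∧ ∃ j, 0 < M j ⬝ᵥ v := by
        rcases lt_or_gt_of_ne hj₀ with h | h
        · exact ⟨-v₀, neg_mem hv₀, j₀, by rw [dotProduct_neg]; linarith⟩
        · exact ⟨v₀, hv₀, j₀, h⟩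
      obtain ⟨t₁, ht₁, hK₁, hW₁⟩ := move hx hv hj
      have hrank₁ : Module.finrank ℝ (Wsub M c (x + t₁ • v)) ≤ d := by
        have := Submodule.finrank_lt_finrank_of_lt hW₁
        omega
      obtain ⟨p₁, r₁, hde₁, hp₁, hn₁, hr₁⟩ := ih (x + t₁ • v) hK₁ hrank₁
      by_cases hneg : ∃ j', 0 < M j' ⬝ᵥ (-v)
      · -- move in both directions; x is a convex combination
        obtain ⟨j', hj'⟩ := hneg
        obtain ⟨t₂, ht₂, hK₂, hW₂⟩ := move hx (neg_mem hv) hj'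
        have hrank₂ : Module.finrank ℝ (Wsub M c (x + t₂ • (-v))) ≤ d := by
          have := Submodule.finrank_lt_finrank_of_lt hW₂
          omega
        obtain ⟨p₂, r₂, hde₂, hp₂, hn₂, hr₂⟩ := ih (x + t₂ • (-v)) hK₂ hrank₂
        rcases eq_or_lt_of_le ht₁ with h1 | h1
        · refine ⟨p₁, r₁, ?_, hp₁, hn₁, hr₁⟩
          rw [← hde₁, ← h1, zero_smul, add_zero]
        rcases eq_or_lt_of_le ht₂ with h2 | h2
        · refine ⟨p₂, r₂, ?_, hp₂, hn₂, hr₂⟩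
          rw [← hde₂, ← h2, zero_smul, add_zero]
        set T : ℝ := t₁ + t₂ with hT
        have hTpos : 0 < T := by rw [hT]; linarith
        have hcombo : x = T⁻¹ • (t₂ • (x + t₁ • v) + t₁ • (x + t₂ • (-v))) := by
          have : t₂ • (x + t₁ • v) + t₁ • (x + t₂ • (-v)) = T • x := by
            rw [hT]; module
          rw [this, smul_smul, inv_mul_cancel₀ (ne_of_gt hTpos), one_smul]
        refine ⟨T⁻¹ • (t₂ • p₁ + t₁ • p₂), T⁻¹ • (t₂ • r₁ + t₁ • r₂), ?_, ?_, ?_, ?_⟩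
        · rw [hcombo, hde₁, hde₂]; module
        · intro i
          have h1' := hp₁ i
          have h2' := hp₂ i
          have : M i ⬝ᵥ (T⁻¹ • (t₂ • p₁ + t₁ • p₂))
              = T⁻¹ * (t₂ * (M i ⬝ᵥ p₁) + t₁ * (M i ⬝ᵥ p₂)) := by
            rw [dotProduct_smul, dotProduct_add, dotProduct_smul, dotProduct_smul]
            simp [mul_add]
          rw [this]
          have hcc : T⁻¹ * (t₂ * (M i ⬝ᵥ p₁) + t₁ * (M i ⬝ᵥ p₂))
              ≤ T⁻¹ * (t₂ * c i + t₁ * c i) := by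
            apply mul_le_mul_of_nonneg_left _ (le_of_lt (inv_pos.mpr hTpos))
            have := mul_le_mul_of_nonneg_left h1' (le_of_lt h2)
            have := mul_le_mul_of_nonneg_left h2' (le_of_lt h1)
            linarith
          have : T⁻¹ * (t₂ * c i + t₁ * c i) = c i := by
            field_simp [hT]; ring
          linarith
        · have : ‖T⁻¹ • (t₂ • p₁ + t₁ • p₂)‖ ≤ T⁻¹ * (t₂ * ‖p₁‖ + t₁ * ‖p₂‖) := by
            calc ‖T⁻¹ • (t₂ • p₁ + t₁ • p₂)‖
                = ‖T⁻¹‖ * ‖t₂ • p₁ + t₁ • p₂‖ := norm_smul _ _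
              _ ≤ ‖T⁻¹‖ * (‖t₂ • p₁‖ + ‖t₁ • p₂‖) :=
                  mul_le_mul_of_nonneg_left (norm_add_le _ _) (norm_nonneg _)
              _ = T⁻¹ * (t₂ * ‖p₁‖ + t₁ * ‖p₂‖) := by
                  rw [norm_smul, norm_smul, Real.norm_eq_abs, Real.norm_eq_abs,
                    Real.norm_eq_abs, abs_of_pos (inv_pos.mpr hTpos),
                    abs_of_pos h1, abs_of_pos h2]
          have hρ0 : T⁻¹ * (t₂ * ‖p₁‖ + t₁ * ‖p₂‖) ≤ T⁻¹ * (t₂ * ρ + t₁ * ρ) := by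
            apply mul_le_mul_of_nonneg_left _ (le_of_lt (inv_pos.mpr hTpos))
            have := mul_le_mul_of_nonneg_left hn₁ (le_of_lt h2)
            have := mul_le_mul_of_nonneg_left hn₂ (le_of_lt h1)
            linarith
          have heq : T⁻¹ * (t₂ * ρ + t₁ * ρ) = ρ := by field_simp [hT]; ring
          linarith
        · intro i
          have : M i ⬝ᵥ (T⁻¹ • (t₂ • r₁ + t₁ • r₂))
              = T⁻¹ * (t₂ * (M i ⬝ᵥ r₁) + t₁ * (M i ⬝ᵥ r₂)) := by
            rw [dotProduct_smul, dotProduct_add, dotProduct_smul, dotProduct_smul]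
            simp [mul_add]
          rw [this]
          have h1' := mul_le_mul_of_nonneg_left (hr₁ i) (le_of_lt h2)
          have h2' := mul_le_mul_of_nonneg_left (hr₂ i) (le_of_lt h1)
          have hsum : t₂ * (M i ⬝ᵥ r₁) + t₁ * (M i ⬝ᵥ r₂) ≤ 0 := by linarith
          exact mul_nonpos_of_nonneg_of_nonpos (le_of_lt (inv_pos.mpr hTpos)) hsum
      · -- -v is a recession direction
        push_neg at hneg
        refine ⟨p₁, r₁ + t₁ • (-v), ?_, hp₁, hn₁, ?_⟩
        · have : x = (x + t₁ • v) + t₁ • (-v) := by module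
          rw [this, hde₁]; module
        · intro i
          rw [dotProduct_add, dotProduct_smul, smul_eq_mul]
          have := hneg i
          have h2 : t₁ * (M i ⬝ᵥ (-v)) ≤ 0 := mul_nonpos_of_nonneg_of_nonpos ht₁ this
          linarith [hr₁ i]


/-- A relatively open convex set intersected with an open set is relatively open. -/
lemma relopen_inter {N : ℕ} {Q U : Set (Fin N → ℝ)} (hQc : Convex ℝ Q)
    (hQ : intrinsicInterior ℝ Q = Q) (hU : IsOpen U) :
    intrinsicInterior ℝ (Q ∩ U) = Q ∩ U := by
  rcases (Q ∩ U).eq_empty_or_nonempty with he | ⟨x₀, hx₀⟩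
  · rw [he, intrinsicInterior_empty]
  -- the affine span of Q ∩ U is that of Q
  have hspan : affineSpan ℝ (Q ∩ U) = affineSpan ℝ Q := by
    apply le_antisymm (affineSpan_mono ℝ Set.inter_subset_left)
    rw [affineSpan_le]
    intro y hy
    obtain ⟨ε, hε, hball⟩ := Metric.isOpen_iff.mp hU x₀ hx₀.2
    set Nn : ℝ := ‖y - x₀‖ with hNn
    have hN0 : 0 ≤ Nn := norm_nonneg _
    set t : ℝ := min 1 (ε / (2 * (Nn + 1))) with htdef
    have ht0 : 0 < t := lt_min one_pos (by positivity)
    have ht1 : t ≤ 1 := min_le_left _ _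
    have hz : x₀ + t • (y - x₀) ∈ Q := hQc.add_smul_sub_mem hx₀.1 hy ⟨le_of_lt ht0, ht1⟩
    have hzU : x₀ + t • (y - x₀) ∈ U := by
      apply hball
      rw [Metric.mem_ball, dist_eq_norm]
      have : x₀ + t • (y - x₀) - x₀ = t • (y - x₀) := by abel
      rw [this, norm_smul, Real.norm_eq_abs, abs_of_pos ht0, ← hNn]
      have h2 : t ≤ ε / (2 * (Nn + 1)) := min_le_right _ _
      have h3 : ε / (2 * (Nn + 1)) * Nn < ε := by
        rw [div_mul_eq_mul_div, div_lt_iff₀ (by positivity)]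
        nlinarith
      nlinarith [mul_le_mul_of_nonneg_right h2 hN0]
    have hmem : x₀ + t • (y - x₀) ∈ affineSpan ℝ (Q ∩ U) :=
      subset_affineSpan ℝ _ ⟨hz, hzU⟩
    have hx₀' : x₀ ∈ affineSpan ℝ (Q ∩ U) := subset_affineSpan ℝ _ hx₀
    have := AffineSubspace.smul_vsub_vadd_mem (affineSpan ℝ (Q ∩ U)) (1 / t)
      hmem hx₀' hx₀'
    have heq : (1 / t) • (x₀ + t • (y - x₀) -ᵥ x₀) +ᵥ x₀ = y := by
      rw [vsub_eq_sub, vadd_eq_add]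
      have h4 : x₀ + t • (y - x₀) - x₀ = t • (y - x₀) := by abel
      rw [h4, smul_smul, one_div, inv_mul_cancel₀ (ne_of_gt ht0), one_smul]
      abel
    rwa [heq] at this
  -- Q is open in the subtype topology of its affine span
  have hQopen : IsOpen ((Subtype.val) ⁻¹' Q : Set (affineSpan ℝ Q)) := by
    have h1 : Subtype.val '' (interior ((Subtype.val) ⁻¹' Q : Set (affineSpan ℝ Q))) = Q := hQ
    have h2 : Subtype.val '' ((Subtype.val) ⁻¹' Q : Set (affineSpan ℝ Q)) = Q := by
      rw [Set.image_preimage_eq_inter_range, Subtype.range_val]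
      exact Set.inter_eq_self_of_subset_left (subset_affineSpan ℝ Q)
    have h3 : interior ((Subtype.val) ⁻¹' Q : Set (affineSpan ℝ Q))
        = (Subtype.val) ⁻¹' Q :=
      Subtype.coe_injective.image_injective (h1.trans h2.symm)
    rw [← h3]
    exact isOpen_interior
  -- transfer openness to the subtype of the span of Q ∩ U
  have hsets : ((affineSpan ℝ (Q ∩ U) : Set (Fin N → ℝ))) = (affineSpan ℝ Q : Set (Fin N → ℝ)) := by
    rw [hspan]
  obtain ⟨O, hO, hOpre⟩ := isOpen_induced_iff.mp hQopen
  have hOQ : ∀ x, x ∈ affineSpan ℝ Q → (x ∈ O ↔ x ∈ Q) := by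
    intro x hx
    exact Set.ext_iff.mp hOpre ⟨x, hx⟩
  have hOpre' : ((Subtype.val) ⁻¹' O : Set (affineSpan ℝ (Q ∩ U)))
      = (Subtype.val) ⁻¹' Q := by
    ext ⟨x, hx⟩
    have hx' : x ∈ affineSpan ℝ Q := by rw [← hspan]; exact hx
    simpa using hOQ x hx'
  have hQopen' : IsOpen ((Subtype.val) ⁻¹' Q : Set (affineSpan ℝ (Q ∩ U))) := by
    rw [← hOpre']
    exact hO.preimage continuous_subtype_val
  have hopen : IsOpen ((Subtype.val) ⁻¹' (Q ∩ U) : Set (affineSpan ℝ (Q ∩ U))) := by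
    rw [Set.preimage_inter]
    exact hQopen'.inter (hU.preimage continuous_subtype_val)
  show Subtype.val '' (interior ((Subtype.val) ⁻¹' (Q ∩ U) : Set (affineSpan ℝ (Q ∩ U)))) = Q ∩ U
  rw [hopen.interior_eq, Set.image_preimage_eq_inter_range, Subtype.range_val]
  exact Set.inter_eq_self_of_subset_left (subset_affineSpan ℝ _)

end Stmt9Aux

open Stmt9Aux

/-- `S` is a relatively open polytope: a bounded relatively open polyhedron. -/
def IsRelOpenPolytope {n : ℕ} (S : Set (Fin n → ℝ)) : Prop :=
  IsRelOpenPolyhedron S ∧ Bornology.IsBounded S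

/-- The recession cone of a set `K`: directions `r` with `K + r ⊆ K`. -/
def recCone {n : ℕ} (K : Set (Fin n → ℝ)) : Set (Fin n → ℝ) :=
  {r | ∀ x ∈ K, x + r ∈ K}

/-- Minkowski–Weyl for relatively open polyhedra: every relatively open
polyhedron `Q` is `P + R` where `P` is a relatively open polytope and
`R = rec(cl Q)`. -/
theorem stmt9 {n : ℕ} (Q : Set (Fin n → ℝ)) (hQ : IsRelOpenPolyhedron Q) :
    ∃ P : Set (Fin n → ℝ), IsRelOpenPolytope P ∧
      Q = P + recCone (closure Q) := by
  classical
  obtain ⟨⟨pp, qq, A, b, C, d, hQdef⟩, hro⟩ := hQ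
  have hmemQ : ∀ x, x ∈ Q ↔ (∀ i, A i ⬝ᵥ x < b i) ∧ (∀ j, C j ⬝ᵥ x ≤ d j) :=
    fun x => Set.ext_iff.mp hQdef x
  rcases Q.eq_empty_or_nonempty with hQe | ⟨x₀, hx₀⟩
  · -- empty case
    subst hQe
    refine ⟨∅, ⟨⟨⟨1, 0, fun _ => 0, fun _ => 0, Fin.elim0, Fin.elim0, ?_⟩,
      intrinsicInterior_empty⟩, Bornology.isBounded_empty⟩, by rw [Set.empty_add]⟩
    ext x
    simp only [Set.mem_empty_iff_false, Set.mem_setOf_eq, false_iff, not_and]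
    intro h
    exact absurd (h 0) (by simp [zero_dotProduct])
  have hx₀' := (hmemQ x₀).mp hx₀
  -- the closed polyhedron
  set M : Fin (pp + qq) → (Fin n → ℝ) := Fin.append A C with hM
  set cc : Fin (pp + qq) → ℝ := Fin.append b d with hcc
  have hQK : ∀ x ∈ Q, ∀ i, M i ⬝ᵥ x ≤ cc i := by
    intro x hx
    have hx' := (hmemQ x).mp hx
    intro i
    refine Fin.addCases (fun i => ?_) (fun j => ?_) i
    · rw [hM, hcc]
      simp only [Fin.append_left]
      exact le_of_lt (hx'.1 i)
    · rw [hM, hcc]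
      simp only [Fin.append_right]
      exact hx'.2 j
  -- K = closure Q
  have hcont : ∀ i, Continuous fun x : Fin n → ℝ => M i ⬝ᵥ x := by
    intro i
    unfold dotProduct
    exact continuous_finset_sum _ fun j _ => continuous_const.mul (continuous_apply j)
  have hKclosed : IsClosed {x : Fin n → ℝ | ∀ i, M i ⬝ᵥ x ≤ cc i} := by
    have : {x : Fin n → ℝ | ∀ i, M i ⬝ᵥ x ≤ cc i} = ⋂ i, {x | M i ⬝ᵥ x ≤ cc i} := by
      ext x; simp [Set.mem_iInter]
    rw [this]
    exact isClosed_iInter fun i => isClosed_le (hcont i) continuous_const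
  have hKsubcl : ∀ y, (∀ i, M i ⬝ᵥ y ≤ cc i) → y ∈ closure Q := by
    intro y hy
    have hyA : ∀ i, A i ⬝ᵥ y ≤ b i := by
      intro i
      have := hy (Fin.castAdd qq i)
      rwa [hM, hcc, Fin.append_left, Fin.append_left] at this
    have hyC : ∀ j, C j ⬝ᵥ y ≤ d j := by
      intro j
      have := hy (Fin.natAdd pp j)
      rwa [hM, hcc, Fin.append_right, Fin.append_right] at this
    have hseq : ∀ k : ℕ, y + (1 / ((k : ℝ) + 1)) • (x₀ - y) ∈ Q := by
      intro k
      set t : ℝ := 1 / ((k : ℝ) + 1) with htdef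
      have ht0 : 0 < t := by positivity
      have ht1 : t ≤ 1 := by
        rw [htdef, div_le_one (by positivity)]
        simp
      rw [hmemQ]
      constructor
      · intro i
        rw [dotProduct_add, dotProduct_smul, dotProduct_sub, smul_eq_mul]
        have h1 := hyA i
        have h2 := hx₀'.1 i
        nlinarith
      · intro j
        rw [dotProduct_add, dotProduct_smul, dotProduct_sub, smul_eq_mul]
        have h1 := hyC j
        have h2 := hx₀'.2 j
        nlinarith
    have htend : Filter.Tendsto (fun k : ℕ => y + (1 / ((k : ℝ) + 1)) • (x₀ - y))
        Filter.atTop (nhds y) := by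
      have h0 : Filter.Tendsto (fun k : ℕ => (1 / ((k : ℝ) + 1))) Filter.atTop (nhds 0) :=
        tendsto_one_div_add_atTop_nhds_zero_nat
      have := (h0.smul_const (x₀ - y)).const_add y
      simpa using this
    exact mem_closure_of_tendsto htend (Filter.Eventually.of_forall hseq)
  have hclQ : closure Q = {x : Fin n → ℝ | ∀ i, M i ⬝ᵥ x ≤ cc i} := by
    apply le_antisymm
    · exact closure_minimal (fun x hx => hQK x hx) hKclosed
    · exact fun y hy => hKsubcl y hy
  -- recession cone of the closure
  have hrec : recCone (closure Q) = {r : Fin n → ℝ | ∀ i, M i ⬝ᵥ r ≤ 0} := by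
    ext r
    constructor
    · intro hr
      have hx₀cl : x₀ ∈ closure Q := subset_closure hx₀
      have hk : ∀ k : ℕ, x₀ + (k : ℝ) • r ∈ closure Q := by
        intro k
        induction k with
        | zero => simpa using hx₀cl
        | succ k ihk =>
          have := hr _ ihk
          rw [add_assoc] at this
          push_cast [add_smul, one_smul]
          exact this
      intro i
      by_contra hpos
      push_neg at hpos
      obtain ⟨k, hkgt⟩ := exists_nat_gt ((cc i - M i ⬝ᵥ x₀) / (M i ⬝ᵥ r))
      have hmem := hk k
      rw [hclQ] at hmem
      have := hmem i
      rw [dotProduct_add, dotProduct_smul, smul_eq_mul] at this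
      rw [div_lt_iff₀ hpos] at hkgt
      linarith
    · intro hr x hx
      rw [hclQ] at hx ⊢
      intro i
      have := hx i
      rw [dotProduct_add]
      linarith [hr i]
  -- the core decomposition
  obtain ⟨ρ, hρ0, hcore⟩ := Stmt9Aux.core M cc
  set β : ℝ := ρ + 2 with hβ
  set U : Set (Fin n → ℝ) := {x | ∀ k, x k < β ∧ -x k < β} with hU
  have hUopen : IsOpen U := by
    have : U = ⋂ k, ({x : Fin n → ℝ | x k < β} ∩ {x | -x k < β}) := by
      ext x; simp [hU, Set.mem_iInter, forall_and]
    rw [this]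
    exact isOpen_iInter_of_finite fun k =>
      (isOpen_lt (continuous_apply k) continuous_const).inter
        (isOpen_lt (continuous_apply k).neg continuous_const)
  have hQconv : Convex ℝ Q := by
    intro x hx y hy a b' ha hb hab
    have hx' := (hmemQ x).mp hx
    have hy' := (hmemQ y).mp hy
    rw [hmemQ]
    constructor
    · intro i
      rw [dotProduct_add, dotProduct_smul, dotProduct_smul, smul_eq_mul, smul_eq_mul]
      have h3 : a * b i + b' * b i = b i := by rw [← add_mul, hab, one_mul]
      rcases lt_or_eq_of_le ha with ha' | ha'
      · have h1 := mul_lt_mul_of_pos_left (hx'.1 i) ha'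
        have h2 := mul_le_mul_of_nonneg_left (le_of_lt (hy'.1 i)) hb
        linarith
      · have hb1 : b' = 1 := by linarith
        rw [← ha', hb1]
        have := hy'.1 i
        linarith
    · intro j
      rw [dotProduct_add, dotProduct_smul, dotProduct_smul, smul_eq_mul, smul_eq_mul]
      have h1 := mul_le_mul_of_nonneg_left (hx'.2 j) ha
      have h2 := mul_le_mul_of_nonneg_left (hy'.2 j) hb
      have h3 : a * d j + b' * d j = d j := by rw [← add_mul, hab, one_mul]
      linarith
  set P : Set (Fin n → ℝ) := Q ∩ U with hP
  have hPgen : IsGenPolyhedron P := by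
    refine ⟨pp + (n + n), qq,
      Fin.append A (Fin.append (fun k => Pi.single k 1) (fun k => -Pi.single k 1)),
      Fin.append b (Fin.append (fun _ => β) (fun _ => β)), C, d, ?_⟩
    ext x
    simp only [hP, Set.mem_inter_iff, hmemQ, hU, Set.mem_setOf_eq]
    constructor
    · rintro ⟨⟨hxA, hxC⟩, hxU⟩
      refine ⟨fun i => ?_, hxC⟩
      refine Fin.addCases (fun i => ?_) (fun i => ?_) i
      · simpa only [Fin.append_left] using hxA i
      · simp only [Fin.append_right]
        refine Fin.addCases (fun k => ?_) (fun k => ?_) i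
        · simp only [Fin.append_left]
          rw [single_dotProduct, one_mul]
          exact (hxU k).1
        · simp only [Fin.append_right]
          rw [neg_dotProduct, single_dotProduct, one_mul]
          exact (hxU k).2
    · rintro ⟨hxA, hxC⟩
      refine ⟨⟨fun i => ?_, hxC⟩, fun k => ⟨?_, ?_⟩⟩
      · have := hxA (Fin.castAdd (n + n) i)
        rwa [Fin.append_left, Fin.append_left] at this
      · have := hxA (Fin.natAdd pp (Fin.castAdd n k))
        rwa [Fin.append_right, Fin.append_right, Fin.append_left, Fin.append_left,
          single_dotProduct, one_mul] at this
      · have := hxA (Fin.natAdd pp (Fin.natAdd n k))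
        rwa [Fin.append_right, Fin.append_right, Fin.append_right, Fin.append_right,
          neg_dotProduct, single_dotProduct, one_mul] at this
  have hPro : intrinsicInterior ℝ P = P := relopen_inter hQconv hro hUopen
  have hPbdd : Bornology.IsBounded P := by
    apply (Metric.isBounded_closedBall (x := (0 : Fin n → ℝ)) (r := β)).subset
    intro x hx
    rw [Metric.mem_closedBall, dist_zero_right]
    apply pi_norm_le_iff_of_nonneg (by rw [hβ]; linarith) |>.mpr
    intro k
    rw [Real.norm_eq_abs, abs_le]
    exact ⟨by linarith [(hx.2 k).2], le_of_lt (hx.2 k).1⟩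
  refine ⟨P, ⟨⟨hPgen, hPro⟩, hPbdd⟩, ?_⟩
  rw [hrec]
  apply Set.Subset.antisymm
  · -- Q ⊆ P + R
    intro x hx
    obtain ⟨pd, rd, hxpr, hpK, hpnorm, hrR⟩ := hcore x (hQK x hx)
    set t : ℝ := 1 / (1 + ‖rd‖) with htdef
    have ht0 : 0 < t := by positivity
    have ht1 : t ≤ 1 := by
      rw [htdef, div_le_one (by positivity)]
      linarith [norm_nonneg rd]
    have htr : t * ‖rd‖ ≤ 1 := by
      rw [htdef, div_mul_eq_mul_div, div_le_one (by positivity), one_mul]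
      linarith [norm_nonneg rd]
    set p' : Fin n → ℝ := pd + t • rd with hp'def
    have hp'alt : p' = (1 - t) • pd + t • x := by
      rw [hp'def, hxpr]
      module
    have hpdA : ∀ i, A i ⬝ᵥ pd ≤ b i := by
      intro i
      have := hpK (Fin.castAdd qq i)
      rwa [hM, hcc, Fin.append_left, Fin.append_left] at this
    have hpdC : ∀ j, C j ⬝ᵥ pd ≤ d j := by
      intro j
      have := hpK (Fin.natAdd pp j)
      rwa [hM, hcc, Fin.append_right, Fin.append_right] at this
    have hx' := (hmemQ x).mp hx
    have hp'Q : p' ∈ Q := by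
      rw [hmemQ, hp'alt]
      constructor
      · intro i
        rw [dotProduct_add, dotProduct_smul, dotProduct_smul, smul_eq_mul, smul_eq_mul]
        have h1 := mul_le_mul_of_nonneg_left (hpdA i) (by linarith : (0:ℝ) ≤ 1 - t)
        have h2 := mul_lt_mul_of_pos_left (hx'.1 i) ht0
        nlinarith
      · intro j
        rw [dotProduct_add, dotProduct_smul, dotProduct_smul, smul_eq_mul, smul_eq_mul]
        have h1 := mul_le_mul_of_nonneg_left (hpdC j) (by linarith : (0:ℝ) ≤ 1 - t)
        have h2 := mul_le_mul_of_nonneg_left (hx'.2 j) (le_of_lt ht0)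
        nlinarith
    have hp'norm : ‖p'‖ ≤ ρ + 1 := by
      calc ‖p'‖ ≤ ‖pd‖ + ‖t • rd‖ := norm_add_le _ _
        _ = ‖pd‖ + t * ‖rd‖ := by
            rw [norm_smul, Real.norm_eq_abs, abs_of_pos ht0]
        _ ≤ ρ + 1 := by linarith
    have hp'U : p' ∈ U := by
      intro k
      have hk := norm_le_pi_norm p' k
      rw [Real.norm_eq_abs] at hk
      have := abs_le.mp (le_trans hk hp'norm)
      constructor
      · rw [hβ]; linarith [this.2]
      · rw [hβ]; linarith [this.1]
    refine ⟨p', ⟨hp'Q, hp'U⟩, (1 - t) • rd, ?_, ?_⟩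
    · intro i
      rw [dotProduct_smul, smul_eq_mul]
      exact mul_nonpos_of_nonneg_of_nonpos (by linarith) (hrR i)
    · rw [hp'def, hxpr]
      module
  · -- P + R ⊆ Q
    rintro z ⟨u, hu, r, hr, rfl⟩
    have hu' := (hmemQ u).mp hu.1
    have hrA : ∀ i, A i ⬝ᵥ r ≤ 0 := by
      intro i
      have := hr (Fin.castAdd qq i)
      rwa [hM, Fin.append_left] at this
    have hrC : ∀ j, C j ⬝ᵥ r ≤ 0 := by
      intro j
      have := hr (Fin.natAdd pp j)
      rwa [hM, Fin.append_right] at this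
    rw [hmemQ]
    constructor
    · intro i
      rw [dotProduct_add]
      linarith [hu'.1 i, hrA i]
    · intro j
      rw [dotProduct_add]
      linarith [hu'.2 j, hrC j]
end
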